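/- arXiv:2301.00175 — 2 statements merged into one kernel-verified Lean document; each statement's English description precedes it below -/
import Mathlib

section
/- For every integer n ≥ 1, the following determinant evaluation holds in the polynomial ring ℤ[Q, r, X_1, …, X_n]: det_{1≤i,j≤n}( X_i^{j} (1+X_i)^{j−1} (Q + rX_i + QX_i)^{n−j} ) = ∏_{i=1}^n X_i · ∏_{1≤i<j≤n} (X_j − X_i) · ( Q(1+X_i)(1+X_j) + rX_iX_j ). -/
noncomputable section

/-- The polynomial ring `ℤ[Q, r, X_1, …, X_n]`. -/
abbrev PR (n : ℕ) : Type := MvPolynomial (Fin n ⊕ Fin 2) ℤ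

/-- The variable `X_i`. -/
def Xv (n : ℕ) (i : Fin n) : PR n := MvPolynomial.X (Sum.inl i)

/-- The variable `Q`. -/
def Qv (n : ℕ) : PR n := MvPolynomial.X (Sum.inr 0)

/-- The variable `r`. -/
def rv (n : ℕ) : PR n := MvPolynomial.X (Sum.inr 1)

/-!
Factoring `X_i` out of row `i` leaves the homogeneous Vandermonde matrix with entries
`a_i ^ j * b_i ^ (n - 1 - j)` for `a = X (1 + X)` and `b = Q + r X + Q X`, whose determinant is
`∏_{i<j} (a_j b_i - a_i b_j)`; each factor splits as
`(X_j - X_i) (Q (1 + X_i) (1 + X_j) + r X_i X_j)`.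
-/

open Finset Matrix

theorem mul_one_add_mul_sub_mul_one_add_mul {R : Type*} [CommRing R] (q r y z : R) :
    z * (1 + z) * (q + r * y + q * y) - y * (1 + y) * (q + r * z + q * z) =
      (z - y) * (q * (1 + y) * (1 + z) + r * y * z) := by
  ring

theorem det_pow_mul_pow_mul_pow {R : Type*} [CommRing R] {n : ℕ} (x : Fin n → R) (q r : R) :
    (Matrix.of fun i j : Fin n =>
        x i ^ ((j : ℕ) + 1) * (1 + x i) ^ (j : ℕ) *
          (q + r * x i + q * x i) ^ (n - 1 - (j : ℕ))).det =
      (∏ i, x i) *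
        ∏ i, ∏ j ∈ Ioi i, (x j - x i) * (q * (1 + x i) * (1 + x j) + r * x i * x j) := by
  have hfactor : (Matrix.of fun i j : Fin n =>
        x i ^ ((j : ℕ) + 1) * (1 + x i) ^ (j : ℕ) *
          (q + r * x i + q * x i) ^ (n - 1 - (j : ℕ))) =
      Matrix.of fun i j => x i *
        projVandermonde (fun i => x i * (1 + x i)) (fun i => q + r * x i + q * x i) i j := by
    ext i j
    rw [of_apply, of_apply, projVandermonde_apply, Fin.val_rev, Nat.sub_sub,
      Nat.add_comm (j : ℕ) 1, mul_pow]
    ring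
  simp only [hfactor, det_mul_column, det_projVandermonde, mul_one_add_mul_sub_mul_one_add_mul]

theorem stmt_13_general (n : ℕ) :
    (Matrix.of fun i j : Fin n =>
        Xv n i ^ ((j : ℕ) + 1) * (1 + Xv n i) ^ (j : ℕ) *
          (Qv n + rv n * Xv n i + Qv n * Xv n i) ^ (n - 1 - (j : ℕ))).det =
    (∏ i : Fin n, Xv n i) *
      ∏ i : Fin n, ∏ j ∈ Finset.Ioi i,
        (Xv n j - Xv n i) *
          (Qv n * (1 + Xv n i) * (1 + Xv n j) + rv n * Xv n i * Xv n j) :=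
  det_pow_mul_pow_mul_pow (Xv n) (Qv n) (rv n)

/-- The Vandermonde-type determinant evaluation used for the `m → ∞` limit. -/
theorem stmt_13 (n : ℕ) (hn : 1 ≤ n) :
    (Matrix.of fun i j : Fin n =>
        Xv n i ^ ((j : ℕ) + 1) * (1 + Xv n i) ^ (j : ℕ) *
          (Qv n + rv n * Xv n i + Qv n * Xv n i) ^ (n - 1 - (j : ℕ))).det =
    (∏ i : Fin n, Xv n i) *
      ∏ i : Fin n, ∏ j ∈ Finset.Ioi i,
        (Xv n j - Xv n i) *
          (Qv n * (1 + Xv n i) * (1 + Xv n j) + rv n * Xv n i * Xv n j) :=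
  stmt_13_general n
end
end

section
/- For every integer n ≥ 1, the following determinant vanishes identically in the polynomial ring ℤ[Q, r, X_1, …, X_n]: det_{1≤i,j≤n}( X_i^{j−1}(1+X_i)^{j−1}(Q + rX_i + QX_i)^{n−j} − X_i^{n−j}(Q+X_i)^{j−1}(X_i + r + Q)^{n−j} ) = 0. -/
noncomputable section

/-- The vanishing determinant from the end of the proof of the bounded identity. -/
theorem stmt_14 (n : ℕ) (hn : 1 ≤ n) :
    (Matrix.of fun i j : Fin n =>
        Xv n i ^ (j : ℕ) * (1 + Xv n i) ^ (j : ℕ) *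
            (Qv n + rv n * Xv n i + Qv n * Xv n i) ^ (n - 1 - (j : ℕ)) -
          Xv n i ^ (n - 1 - (j : ℕ)) * (Qv n + Xv n i) ^ (j : ℕ) *
            (Xv n i + rv n + Qv n) ^ (n - 1 - (j : ℕ))).det = 0 := by
  rw [← Matrix.exists_mulVec_eq_zero_iff]
  refine ⟨fun j => ((n - 1).choose (j : ℕ) : PR n), ?_, ?_⟩
  · intro h
    have h0 := congrFun h ⟨0, hn⟩
    simp at h0
  · funext i
    set X := Xv n i
    set Q := Qv n
    set r := rv n
    simp only [Matrix.mulVec, dotProduct, Matrix.of_apply, Pi.zero_apply]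
    have key : ∀ (u v s t : PR n), u + v = s + t →
        ∑ j : Fin n, (u ^ (j : ℕ) * v ^ (n - 1 - (j : ℕ)) -
          s ^ (j : ℕ) * t ^ (n - 1 - (j : ℕ))) * ((n - 1).choose (j : ℕ) : PR n) = 0 := by
      intro u v s t huv
      have hsum : ∀ a b : PR n, ∑ j : Fin n,
          a ^ (j : ℕ) * b ^ (n - 1 - (j : ℕ)) * ((n - 1).choose (j : ℕ) : PR n)
          = (a + b) ^ (n - 1) := by
        intro a b
        rw [add_pow, Fin.sum_univ_eq_sum_range
          (fun j => a ^ j * b ^ (n - 1 - j) * ((n - 1).choose j : PR n)),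
          show n - 1 + 1 = n from by omega]
      calc ∑ j : Fin n, (u ^ (j : ℕ) * v ^ (n - 1 - (j : ℕ)) -
              s ^ (j : ℕ) * t ^ (n - 1 - (j : ℕ))) * ((n - 1).choose (j : ℕ) : PR n)
          = (∑ j : Fin n, u ^ (j : ℕ) * v ^ (n - 1 - (j : ℕ)) * ((n - 1).choose (j : ℕ) : PR n))
            - ∑ j : Fin n, s ^ (j : ℕ) * t ^ (n - 1 - (j : ℕ)) * ((n - 1).choose (j : ℕ) : PR n) := by
            rw [← Finset.sum_sub_distrib]
            exact Finset.sum_congr rfl fun j _ => by ring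
        _ = (u + v) ^ (n - 1) - (s + t) ^ (n - 1) := by rw [hsum, hsum]
        _ = 0 := by rw [huv, sub_self]
    have hk := key (X * (1 + X)) (Q + r * X + Q * X) (Q + X) (X * (X + r + Q)) (by ring)
    simp only [mul_pow] at hk
    rw [← hk]
    exact Finset.sum_congr rfl fun j _ => by ring
end
end
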